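/- arXiv:2101.02352 — 3 statements merged into one kernel-verified Lean document; each statement's English description precedes it below -/
import Mathlib

section
/- For points x = (x₁,x₂) and y = (y₁,y₂) in [0,2)×[0,1), if x₁ − y₁ − 1/2 is an integer and 4(x₂ − y₂) is an odd integer (i.e., x₁ − y₁ = k ± 1/2 and x₂ − y₂ = k'/2 ± 1/4 for some integers k, k'), then the Möbius distance attains its upper bound: dist(x,y) = 3/4. -/
/-- `mmod k u` is the unique element of `[0, k)` such that `u - mmod k u`
is an integer multiple of `k`. -/
noncomputable def mmod (k : ℕ) (u : ℝ) : ℝ := u - (k : ℝ) * (⌊u / (k : ℝ)⌋ : ℤ)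

/-- `dmod k u = min (mmod k u) (k - mmod k u)`. -/
noncomputable def dmod (k : ℕ) (u : ℝ) : ℝ := min (mmod k u) ((k : ℝ) - mmod k u)

/-- Distance on the Möbius ring `M²`, whose points lie in `[0,2) × [0,1)`. -/
noncomputable def distM2 (x y : ℝ × ℝ) : ℝ :=
  min (dmod 2 (y.1 - x.1) + dmod 1 (y.2 - x.2))
      (dmod 2 (y.1 - x.1 + 1) + dmod 1 (y.2 - x.2 + 1/2))

lemma mmod_add_mul_intCast (k : ℕ) (u : ℝ) (n : ℤ) : mmod k (u + k * n) = mmod k u := by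
  rcases eq_or_ne (k : ℝ) 0 with hk | hk
  · simp [hk]
  · unfold mmod
    rw [show (u + k * n) / k = u / k + n by field_simp, Int.floor_add_intCast]
    push_cast
    ring

lemma mmod_of_mem_Ico {k : ℕ} {u : ℝ} (hu : u ∈ Set.Ico 0 (k : ℝ)) : mmod k u = u := by
  have hk : (0 : ℝ) < k := hu.1.trans_lt hu.2
  simp [mmod, Int.floor_eq_zero_iff, div_nonneg hu.1 hk.le, div_lt_one hk, hu.2]

/-- Modulo `k` such a `u` is `k / 4` or `3k / 4`, both at distance `k / 4` from `kℤ`. -/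
lemma dmod_eq_quarter (k : ℕ) (u : ℝ) (n : ℤ) (hu : u = k / 4 + k / 2 * n) :
    dmod k u = k / 4 := by
  rcases Nat.eq_zero_or_pos k with rfl | hk
  · simp [dmod, mmod, hu]
  have hk : (0 : ℝ) < k := by exact_mod_cast hk
  obtain ⟨m, rfl | rfl⟩ := Int.even_or_odd' n
  · have hmod : mmod k u = k / 4 := by
      rw [show u = k / 4 + k * m by rw [hu]; push_cast; ring, mmod_add_mul_intCast,
        mmod_of_mem_Ico ⟨by positivity, by linarith⟩]
    rw [dmod, hmod, min_eq_left (by linarith)]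
  · have hmod : mmod k u = 3 * k / 4 := by
      rw [show u = 3 * k / 4 + k * m by rw [hu]; push_cast; ring, mmod_add_mul_intCast,
        mmod_of_mem_Ico ⟨by positivity, by linarith⟩]
    rw [dmod, hmod, min_eq_right (by linarith)]
    ring

theorem distM2_eq_upper_bound_general (x y : ℝ × ℝ)
    (h1 : ∃ k : ℤ, x.1 - y.1 - 1/2 = (k : ℝ))
    (h2 : ∃ k' : ℤ, 4 * (x.2 - y.2) = 2 * (k' : ℝ) + 1) :
    distM2 x y = 3/4 := by
  obtain ⟨k, hk⟩ := h1
  obtain ⟨k', hk'⟩ := h2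
  have h₁ : dmod 2 (y.1 - x.1) = 1 / 2 := by
    rw [dmod_eq_quarter 2 _ (-k - 1) (by push_cast; linarith)]; norm_num
  have h₁' : dmod 2 (y.1 - x.1 + 1) = 1 / 2 := by
    rw [dmod_eq_quarter 2 _ (-k) (by push_cast; linarith)]; norm_num
  have h₂ : dmod 1 (y.2 - x.2) = 1 / 4 := by
    rw [dmod_eq_quarter 1 _ (-k' - 1) (by push_cast; linarith)]; norm_num
  have h₂' : dmod 1 (y.2 - x.2 + 1 / 2) = 1 / 4 := by
    rw [dmod_eq_quarter 1 _ (-k') (by push_cast; linarith)]; norm_num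
  rw [distM2, h₁, h₁', h₂, h₂']
  norm_num

/-- If `x₁ - y₁ - 1/2` is an integer and `4 (x₂ - y₂)` is an odd integer, then the
Möbius distance attains its upper bound `3/4`. -/
theorem distM2_eq_upper_bound (x y : ℝ × ℝ)
    (hx : x ∈ Set.Ico (0:ℝ) 2 ×ˢ Set.Ico (0:ℝ) 1)
    (hy : y ∈ Set.Ico (0:ℝ) 2 ×ˢ Set.Ico (0:ℝ) 1)
    (h1 : ∃ k : ℤ, x.1 - y.1 - 1/2 = (k : ℝ))
    (h2 : ∃ k' : ℤ, 4 * (x.2 - y.2) = 2 * (k' : ℝ) + 1) :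
    distM2 x y = 3/4 :=
  distM2_eq_upper_bound_general x y h1 h2
end

section
/- For coprime positive integers p and q, the upper bound of the Möbius distance on M^{q/p} is attained at the point (1/(2p), 1/(2q)): dist((0,0),(1/(2p),1/(2q))) = 1/(2p) + 1/(2q). -/
/-- Distance on the Möbius ring `M^{q/p}`, whose points lie in `[0,q) × [0,p)`:
the minimum over `j ∈ {0, …, p*q - 1}` of
`dmod q (y₁ - x₁ + j/p) + dmod p (y₂ - x₂ + j/q)`. -/
noncomputable def distMqp (p q : ℕ) (x y : ℝ × ℝ) : ℝ :=
  sInf {v : ℝ | ∃ j ∈ Finset.range (p * q),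
    v = dmod q (y.1 - x.1 + (j : ℝ) / (p : ℝ)) + dmod p (y.2 - x.2 + (j : ℝ) / (q : ℝ))}

/-- Addition on the Möbius ring `M^{q/p}`. -/
noncomputable def oplusMqp (p q : ℕ) (x y : ℝ × ℝ) : ℝ × ℝ :=
  (mmod q (x.1 + y.1), mmod p (x.2 + y.2))

/-!
Shifting `(0,0)` by `(1/(2p), 1/(2q))` and then by `j` steps of `(1/p, 1/q)` lands at
`((2j+1)/(2p), (2j+1)/(2q))`. Reducing an odd multiple of `1/(2p)` modulo `q` (an even multiple of
`1/(2p)`), or reflecting it to `q - ·`, keeps it an odd multiple, so its circular distance to `0`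
is at least `1/(2p)`; likewise in the second coordinate. The bound is reached at `j = 0`.
-/

lemma mmod_eq_mul_fract {k : ℕ} (hk : 0 < k) (u : ℝ) : mmod k u = k * Int.fract (u / k) := by
  have hk' : (k : ℝ) ≠ 0 := by positivity
  rw [mmod, Int.fract, mul_sub, mul_div_cancel₀ u hk']

lemma mmod_nonneg {k : ℕ} (hk : 0 < k) (u : ℝ) : 0 ≤ mmod k u := by
  rw [mmod_eq_mul_fract hk]
  exact mul_nonneg k.cast_nonneg (Int.fract_nonneg _)

lemma mmod_lt {k : ℕ} (hk : 0 < k) (u : ℝ) : mmod k u < k := by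
  rw [mmod_eq_mul_fract hk]
  exact mul_lt_of_lt_one_right (by positivity) (Int.fract_lt_one _)

lemma dmod_of_nonneg_of_two_mul_le {k : ℕ} (hk : 0 < k) {u : ℝ} (hu : 0 ≤ u) (h : 2 * u ≤ k) :
    dmod k u = u := by
  have hk' : (0 : ℝ) < k := by exact_mod_cast hk
  have hfloor : ⌊u / k⌋ = 0 := Int.floor_eq_zero_iff.mpr
    ⟨div_nonneg hu hk'.le, (div_lt_one hk').mpr (by linarith)⟩
  have hmmod : mmod k u = u := by simp [mmod, hfloor]
  rw [dmod, hmmod, min_eq_left (by linarith)]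

lemma two_mul_one_div_two_mul_le {p k : ℕ} (hp : 0 < p) (hk : 0 < k) :
    2 * (1 / (2 * (p : ℝ))) ≤ k := by
  have hp1 : (1 : ℝ) ≤ p := by exact_mod_cast hp
  have hk1 : (1 : ℝ) ≤ k := by exact_mod_cast hk
  calc 2 * (1 / (2 * (p : ℝ))) = 1 / p := by field_simp
    _ ≤ 1 := div_le_one_of_le₀ hp1 (by positivity)
    _ ≤ k := hk1

lemma le_of_odd_mul_nonneg {r : ℝ} (hr : 0 < r) {c : ℤ} (hc : Odd c) (h : 0 ≤ c * r) :
    r ≤ c * r := by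
  have hc0 : (0 : ℝ) ≤ c := nonneg_of_mul_nonneg_left h hr
  have hc1 : (1 : ℤ) ≤ c := by
    obtain ⟨m, rfl⟩ := hc
    have : (0 : ℤ) ≤ 2 * m + 1 := by exact_mod_cast hc0
    omega
  simpa using mul_le_mul_of_nonneg_right (show (1 : ℝ) ≤ c by exact_mod_cast hc1) hr.le

lemma le_dmod_odd_mul {k : ℕ} (hk : 0 < k) {r : ℝ} (hr : 0 < r) {m : ℤ}
    (hkm : (k : ℝ) = 2 * m * r) {c : ℤ} (hc : Odd c) : r ≤ dmod k (c * r) := by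
  set n := ⌊(c * r) / k⌋
  have hmmod_def : mmod k (c * r) = c * r - k * n := rfl
  have hmmod : mmod k (c * r) = ((c - 2 * m * n : ℤ) : ℝ) * r := by
    rw [hmmod_def, hkm]; push_cast; ring
  have hcompl : (k : ℝ) - mmod k (c * r) = ((2 * m * (n + 1) - c : ℤ) : ℝ) * r := by
    rw [hmmod_def, hkm]; push_cast; ring
  have hodd₁ : Odd (c - 2 * m * n) := hc.sub_even (even_two_mul _ |>.mul_right _)
  have hodd₂ : Odd (2 * m * (n + 1) - c) := (even_two_mul _ |>.mul_right _).sub_odd hc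
  refine le_min ?_ ?_
  · rw [hmmod]
    exact le_of_odd_mul_nonneg hr hodd₁ (hmmod ▸ mmod_nonneg hk _)
  · rw [hcompl]
    exact le_of_odd_mul_nonneg hr hodd₂ (hcompl ▸ sub_nonneg.mpr (mmod_lt hk _).le)

lemma one_div_two_mul_le_dmod {p k : ℕ} (hp : 0 < p) (hk : 0 < k) {c : ℤ} (hc : Odd c) :
    1 / (2 * (p : ℝ)) ≤ dmod k (c * (1 / (2 * (p : ℝ)))) := by
  have hp' : (p : ℝ) ≠ 0 := by positivity
  refine le_dmod_odd_mul hk (by positivity) (m := p * k) ?_ hc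
  push_cast
  field_simp

lemma one_div_two_mul_add_div (p : ℕ) (hp : 0 < p) (j : ℕ) :
    1 / (2 * (p : ℝ)) + j / p = ((2 * j + 1 : ℤ) : ℝ) * (1 / (2 * (p : ℝ))) := by
  have hp' : (p : ℝ) ≠ 0 := by positivity
  push_cast
  field_simp
  ring

theorem distMqp_attains_upper_bound_general (p q : ℕ) (hp : 0 < p) (hq : 0 < q) :
    distMqp p q (0, 0) (1 / (2 * (p : ℝ)), 1 / (2 * (q : ℝ)))
      = 1 / (2 * (p : ℝ)) + 1 / (2 * (q : ℝ)) := by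
  apply IsLeast.csInf_eq
  constructor
  · refine ⟨0, Finset.mem_range.mpr (Nat.mul_pos hp hq), ?_⟩
    simp only [Nat.cast_zero, zero_div, sub_zero, add_zero]
    rw [dmod_of_nonneg_of_two_mul_le hq (by positivity) (two_mul_one_div_two_mul_le hp hq),
      dmod_of_nonneg_of_two_mul_le hp (by positivity) (two_mul_one_div_two_mul_le hq hp)]
  · rintro v ⟨j, -, rfl⟩
    have hodd : Odd (2 * (j : ℤ) + 1) := odd_two_mul_add_one _
    simp only [sub_zero]
    rw [one_div_two_mul_add_div p hp, one_div_two_mul_add_div q hq]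
    exact add_le_add (one_div_two_mul_le_dmod hp hq hodd) (one_div_two_mul_le_dmod hq hp hodd)

/-- The upper bound of the Möbius distance on `M^{q/p}` is attained at the point
`(1/(2p), 1/(2q))`. -/
theorem distMqp_attains_upper_bound (p q : ℕ) (hp : 0 < p) (hq : 0 < q)
    (hpq : Nat.Coprime p q) :
    distMqp p q (0, 0) (1 / (2 * (p : ℝ)), 1 / (2 * (q : ℝ)))
      = 1 / (2 * (p : ℝ)) + 1 / (2 * (q : ℝ)) :=
  distMqp_attains_upper_bound_general p q hp hq
end

section
/- For coprime positive integers p and q, a point x = (x₁,x₂) ∈ [0,q)×[0,p) satisfies dist(x,(0,0)) = 0 if and only if there exists j ∈ {0,1,…,pq−1} such that x = (m_q(j/p), m_p(j/q)). -/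
lemma mmod_mem_Ico {k : ℕ} (hk : 0 < k) (u : ℝ) : mmod k u ∈ Set.Ico 0 (k : ℝ) := by
  have hk' : (0 : ℝ) < k := by exact_mod_cast hk
  rw [mmod_eq_mul_fract hk]
  exact ⟨by have := Int.fract_nonneg (u / k); positivity,
    mul_lt_of_lt_one_right hk' (Int.fract_lt_one _)⟩

lemma mmod_sub_eq_zero_iff {k : ℕ} (hk : 0 < k) {u : ℝ} (hu : u ∈ Set.Ico 0 (k : ℝ)) (w : ℝ) :
    mmod k (w - u) = 0 ↔ u = mmod k w := by
  have hk' : (0 : ℝ) < k := by exact_mod_cast hk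
  have hu' : u / k ∈ Set.Ico 0 1 :=
    ⟨div_nonneg hu.1 hk'.le, (div_lt_one hk').mpr hu.2⟩
  rw [mmod_eq_mul_fract hk, mmod_eq_mul_fract hk, mul_eq_zero, mul_comm, eq_comm (a := u),
    ← eq_div_iff hk'.ne', Int.fract_eq_iff, Int.fract_eq_iff, sub_div]
  simp [hk'.ne', hu'.1, hu'.2]

lemma dmod_nonneg {k : ℕ} (hk : 0 < k) (u : ℝ) : 0 ≤ dmod k u := by
  have := mmod_mem_Ico hk u
  exact le_min this.1 (sub_nonneg.mpr this.2.le)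

lemma dmod_eq_zero_iff {k : ℕ} (hk : 0 < k) (u : ℝ) : dmod k u = 0 ↔ mmod k u = 0 := by
  have := mmod_mem_Ico hk u
  rw [dmod, min_eq_iff]
  constructor
  · rintro (⟨h, -⟩ | ⟨h, -⟩) <;> linarith [this.2]
  · intro h
    exact .inl ⟨h, by linarith [this.2]⟩

lemma sInf_finset_image_eq_zero_iff {ι : Type*} {s : Finset ι} (hs : s.Nonempty) {f : ι → ℝ}
    (hf : ∀ i ∈ s, 0 ≤ f i) : sInf {v : ℝ | ∃ i ∈ s, v = f i} = 0 ↔ ∃ i ∈ s, f i = 0 := by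
  have himage : {v : ℝ | ∃ i ∈ s, v = f i} = f '' s := by
    ext v
    simp [eq_comm]
  have hne : (f '' s).Nonempty := (Finset.coe_nonempty.mpr hs).image f
  have hlb : ∀ v ∈ f '' s, 0 ≤ v := Set.forall_mem_image.mpr hf
  rw [himage]
  constructor
  · intro h
    obtain ⟨i, hi, hfi⟩ := hne.csInf_mem (s.finite_toSet.image f)
    exact ⟨i, hi, hfi.trans h⟩
  · rintro ⟨i, hi, hfi⟩
    exact le_antisymm (hfi ▸ csInf_le ⟨0, hlb⟩ (Set.mem_image_of_mem f hi)) (le_csInf hne hlb)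

theorem distMqp_zero_iff_general (p q : ℕ) (hp : 0 < p) (hq : 0 < q)
    (x : ℝ × ℝ) (hx : x ∈ Set.Ico (0:ℝ) (q : ℝ) ×ˢ Set.Ico (0:ℝ) (p : ℝ)) :
    distMqp p q x (0, 0) = 0 ↔
      ∃ j ∈ Finset.range (p * q),
        x = (mmod q ((j : ℝ) / (p : ℝ)), mmod p ((j : ℝ) / (q : ℝ))) := by
  have hrange : (Finset.range (p * q)).Nonempty := Finset.nonempty_range_iff.mpr (by positivity)
  rw [distMqp, sInf_finset_image_eq_zero_iff hrange
    fun j _ => add_nonneg (dmod_nonneg hq _) (dmod_nonneg hp _)]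
  refine exists_congr fun j => and_congr_right fun _ => ?_
  rw [add_eq_zero_iff_of_nonneg (dmod_nonneg hq _) (dmod_nonneg hp _), dmod_eq_zero_iff hq,
    dmod_eq_zero_iff hp, zero_sub, neg_add_eq_sub, zero_sub, neg_add_eq_sub,
    mmod_sub_eq_zero_iff hq hx.1, mmod_sub_eq_zero_iff hp hx.2, Prod.ext_iff]

/-- A point `x ∈ [0,q) × [0,p)` is a zero point of `M^{q/p}` iff
`x = (mmod q (j/p), mmod p (j/q))` for some `j ∈ {0, …, p*q - 1}`. -/
theorem distMqp_zero_iff (p q : ℕ) (hp : 0 < p) (hq : 0 < q) (hpq : Nat.Coprime p q)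
    (x : ℝ × ℝ) (hx : x ∈ Set.Ico (0:ℝ) (q : ℝ) ×ˢ Set.Ico (0:ℝ) (p : ℝ)) :
    distMqp p q x (0, 0) = 0 ↔
      ∃ j ∈ Finset.range (p * q),
        x = (mmod q ((j : ℝ) / (p : ℝ)), mmod p ((j : ℝ) / (q : ℝ))) :=
  distMqp_zero_iff_general p q hp hq x hx
end
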